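/- There are no nonnegative integers n, m, a with n > m and n > 200 such that 3^a = α^n + α^m; in particular, for such n, m, a the quantity Λ = 3^a·α^{−n}·(1 + α^{m−n})^{−1} − 1 is nonzero. -/

import Mathlib

/-!
With `F_k` the Fibonacci numbers, `φ ^ k = F_k φ + (F_{k+1} - F_k)`, so `φ ^ n + φ ^ m` is
`(F_n + F_m) φ` plus an integer. For `n ≥ 1` the coefficient `F_n + F_m` is positive, hence the sum
is irrational and cannot equal `3 ^ a`. As `Λ = 3 ^ a / (α ^ n + α ^ m) - 1`, it vanishes only at
such a solution.
-/

open Real goldenRatio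

/-- The golden ratio `α = (1 + √5)/2`. -/
noncomputable def α : ℝ := (1 + Real.sqrt 5) / 2

lemma α_eq_goldenRatio : α = φ := rfl

lemma goldenRatio_pow_eq_fib_mul_add (k : ℕ) :
    φ ^ k = Nat.fib k * φ + ((Nat.fib (k + 1) : ℤ) - Nat.fib k : ℤ) := by
  rw [← fib_succ_sub_goldenConj_mul_fib, ← one_sub_goldenConj]
  push_cast
  ring

lemma irrational_goldenRatio_pow_add_pow {n : ℕ} (hn : n ≠ 0) (m : ℕ) :
    Irrational (φ ^ n + φ ^ m) := by
  have hfib : Nat.fib n + Nat.fib m ≠ 0 := by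
    have := Nat.fib_pos.mpr (Nat.pos_of_ne_zero hn)
    omega
  have hsum : φ ^ n + φ ^ m = ((Nat.fib n + Nat.fib m : ℕ) : ℝ) * φ +
      ((Nat.fib (n + 1) - Nat.fib n + (Nat.fib (m + 1) - Nat.fib m) : ℤ) : ℝ) := by
    rw [goldenRatio_pow_eq_fib_mul_add n, goldenRatio_pow_eq_fib_mul_add m]
    push_cast
    ring
  rw [hsum]
  exact (goldenRatio_irrational.natCast_mul hfib).add_intCast _

lemma mul_zpow_neg_mul_inv_one_add_zpow_sub {K : Type*} [Field K] (x : K) {a : K} (ha : a ≠ 0)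
    (n m : ℕ) : x * a ^ (-(n : ℤ)) * (1 + a ^ ((m : ℤ) - (n : ℤ)))⁻¹ = x / (a ^ n + a ^ m) := by
  have hfactor : a ^ n + a ^ m = a ^ n * (1 + a ^ ((m : ℤ) - (n : ℤ))) := by
    rw [zpow_sub₀ ha, zpow_natCast, zpow_natCast]
    field_simp
  rw [hfactor, zpow_neg, zpow_natCast, div_eq_mul_inv, mul_inv, mul_assoc]

/-- There are no nonnegative integers `n, m, a` with `n > m` and `n > 200` such that
`3^a = α^n + α^m`; in particular, for such `n, m, a` the quantity
`Λ = 3^a·α^(−n)·(1 + α^(m−n))⁻¹ − 1` is nonzero. -/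
theorem Lambda_ne_zero :
    (¬ ∃ n m a : ℕ, m < n ∧ 200 < n ∧ (3 : ℝ) ^ a = α ^ n + α ^ m) ∧
    (∀ n m a : ℕ, m < n → 200 < n →
      (3 : ℝ) ^ a * α ^ (-(n : ℤ)) * (1 + α ^ ((m : ℤ) - (n : ℤ)))⁻¹ - 1 ≠ 0) := by
  have no_solution : ¬ ∃ n m a : ℕ, m < n ∧ 200 < n ∧ (3 : ℝ) ^ a = α ^ n + α ^ m := by
    rintro ⟨n, m, a, -, hn, h⟩
    rw [α_eq_goldenRatio] at h
    exact (irrational_goldenRatio_pow_add_pow (by omega) m).ne_nat (3 ^ a) (mod_cast h.symm)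
  refine ⟨no_solution, fun n m a hmn hn hΛ => no_solution ⟨n, m, a, hmn, hn, ?_⟩⟩
  have hα : 0 < α := α_eq_goldenRatio ▸ goldenRatio_pos
  have hpos : 0 < α ^ n + α ^ m := by positivity
  rwa [mul_zpow_neg_mul_inv_one_add_zpow_sub _ hα.ne', sub_eq_zero,
    div_eq_one_iff_eq hpos.ne'] at hΛ
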